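/- Let h be the Heaviside function (indicator of [0,∞)) and F ∈ L²(ℝ, H) for a Hilbert space H with |∂_t|^{1/4}F ∈ L²(ℝ, H). Then ‖|∂_t|^{1/4}(hF)‖_{L²(ℝ,H)} ≲ ‖|∂_t|^{1/4}F‖_{L²(ℝ,H)}, i.e. multiplication by the Heaviside function is bounded on the homogeneous Sobolev space Ḣ^{1/4}(ℝ; H) (intersected with L²). -/

import Mathlib

open MeasureTheory Complex Real
open scoped ENNReal

noncomputable section

/-- The squared homogeneous `Ḣ^{1/4}(ℝ; H)` seminorm, via the double-integral
characterization `‖u‖²_{Ḣ^{1/4}} = c ∫∫ ‖u(t)−u(s)‖²_H / |t−s|^{3/2} dt ds`. -/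
def sobQuarterSq {H : Type*} [NormedAddCommGroup H] (u : ℝ → H) : ℝ≥0∞ :=
  ∫⁻ t : ℝ, ∫⁻ s : ℝ,
    (‖u t - u s‖₊ : ℝ≥0∞) ^ 2 / (ENNReal.ofReal |t - s|) ^ ((3 : ℝ) / 2)

/-!
Cutting `F` at `0` changes `‖F t - F s‖²` only for `t ≥ 0 > s` (and symmetrically), where it
becomes `‖F t‖²`; these pairs contribute
`∫_{t>0} ‖F t‖² ∫_{s<0} |t-s|^{-3/2} ds dt = 2 ∫_{t>0} ‖F t‖² t^{-1/2} dt`.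
This weighted integral is controlled by a Hardy-type inequality: averaging
`‖F t‖² ≤ 2‖F t - F s‖² + 2‖F s‖²` over `s ∈ (t, 25t)` and using Tonelli bounds
`24 ∫_{t>ε} ‖F t‖² t^{-1/2}` by `250 ‖F‖²_{Ḣ^{1/4}} + 20 ∫_{t>ε} ‖F t‖² t^{-1/2}`, and the last term
is absorbed, since `F ∈ L²` makes it finite for `ε > 0`.
-/

open Set

theorem lintegral_Ioi_rpow_of_lt {r a : ℝ} (hr : r < -1) (ha : 0 < a) :
    ∫⁻ t in Ioi a, ENNReal.ofReal (t ^ r) = ENNReal.ofReal (-a ^ (r + 1) / (r + 1)) := by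
  rw [← ofReal_integral_eq_lintegral_ofReal (integrableOn_Ioi_rpow_of_lt hr ha)
      ((ae_restrict_iff' measurableSet_Ioi).2
        (ae_of_all _ fun t ht => Real.rpow_nonneg (ha.trans ht).le _)),
    integral_Ioi_rpow_of_lt hr ha]

theorem lintegral_Ioi_rpow_neg_three_halves {a : ℝ} (ha : 0 < a) :
    ∫⁻ t in Ioi a, ENNReal.ofReal (t ^ (-(3 / 2) : ℝ)) =
      2 * ENNReal.ofReal (a ^ (-(1 / 2) : ℝ)) := by
  rw [lintegral_Ioi_rpow_of_lt (by norm_num) ha, ← ENNReal.ofReal_ofNat 2,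
    ← ENNReal.ofReal_mul zero_le_two]
  congr 1
  norm_num
  ring_nf

theorem lintegral_Ioi_div_25_rpow_neg_three_halves {s : ℝ} (hs : 0 < s) :
    ∫⁻ t in Ioi (s / 25), ENNReal.ofReal (t ^ (-(3 / 2) : ℝ)) =
      10 * ENNReal.ofReal (s ^ (-(1 / 2) : ℝ)) := by
  have h25 : (s / 25) ^ (-(1 / 2) : ℝ) = 5 * s ^ (-(1 / 2) : ℝ) := by
    rw [Real.div_rpow hs.le (by norm_num), show (25 : ℝ) = 5 ^ (2 : ℝ) by norm_num,
      ← Real.rpow_mul (by norm_num)]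
    norm_num
    ring
  rw [lintegral_Ioi_rpow_neg_three_halves (by positivity), h25, ENNReal.ofReal_mul (by norm_num),
    ENNReal.ofReal_ofNat, ← mul_assoc]
  norm_num

theorem lintegral_Iio_zero_inv_rpow_sub {t : ℝ} (ht : 0 < t) :
    ∫⁻ s in Iio 0, (ENNReal.ofReal |t - s| ^ ((3 : ℝ) / 2))⁻¹ =
      2 * ENNReal.ofReal (t ^ (-(1 / 2) : ℝ)) := by
  have hsub : ∫⁻ s in Iio 0, (ENNReal.ofReal |t - s| ^ ((3 : ℝ) / 2))⁻¹ =
      ∫⁻ u in Ioi t, (ENNReal.ofReal |u| ^ ((3 : ℝ) / 2))⁻¹ := by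
    have h := (Measure.measurePreserving_sub_left volume t).setLIntegral_comp_emb
      (Homeomorph.subLeft t).measurableEmbedding
      (fun u => (ENNReal.ofReal |u| ^ ((3 : ℝ) / 2))⁻¹) (Iio 0)
    simpa [image_const_sub_Iio] using h
  rw [hsub, ← lintegral_Ioi_rpow_neg_three_halves ht]
  refine setLIntegral_congr_fun measurableSet_Ioi fun u hu => ?_
  have hu0 : 0 < u := ht.trans hu
  rw [abs_of_pos hu0, ← ENNReal.rpow_neg, ENNReal.ofReal_rpow_of_pos hu0]

theorem lintegral_Ici_lintegral_Iio_div_rpow (f : ℝ → ℝ≥0∞) :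
    ∫⁻ t in Ici 0, ∫⁻ s in Iio 0, f t / ENNReal.ofReal |t - s| ^ ((3 : ℝ) / 2) =
      2 * ∫⁻ t in Ioi 0, f t * ENNReal.ofReal (t ^ (-(1 / 2) : ℝ)) := by
  rw [← setLIntegral_congr Ioi_ae_eq_Ici, ← lintegral_const_mul' _ _ (by simp)]
  refine setLIntegral_congr_fun measurableSet_Ioi fun t ht => ?_
  simp_rw [div_eq_mul_inv (f t)]
  rw [lintegral_const_mul _ (by fun_prop), lintegral_Iio_zero_inv_rpow_sub ht]
  ring

theorem rpow_neg_three_halves_le {t d : ℝ} (ht : 0 < t) (hd : 0 < d) (hdt : d ≤ 25 * t) :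
    t ^ (-(3 / 2) : ℝ) ≤ 125 * d ^ (-(3 / 2) : ℝ) := by
  have h25 : (25 : ℝ) ^ (-(3 / 2) : ℝ) = 125⁻¹ := by
    rw [show (25 : ℝ) = 5 ^ (2 : ℝ) by norm_num, ← Real.rpow_mul (by norm_num)]
    norm_num
  calc t ^ (-(3 / 2) : ℝ) = 125 * (25 * t) ^ (-(3 / 2) : ℝ) := by
        rw [Real.mul_rpow (by norm_num) ht.le, h25, ← mul_assoc, mul_inv_cancel₀ (by norm_num),
          one_mul]
    _ ≤ 125 * d ^ (-(3 / 2) : ℝ) :=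
        mul_le_mul_of_nonneg_left (Real.rpow_le_rpow_of_nonpos hd hdt (by norm_num))
          (by norm_num)

theorem ofReal_rpow_neg_three_halves_le_div {t s : ℝ} (ht : 0 < t) (hts : t < s)
    (hst : s < 25 * t) :
    ENNReal.ofReal (t ^ (-(3 / 2) : ℝ)) ≤ 125 / ENNReal.ofReal |t - s| ^ ((3 : ℝ) / 2) := by
  have hd : 0 < s - t := sub_pos.2 hts
  rw [abs_sub_comm, abs_of_pos hd, div_eq_mul_inv (125 : ℝ≥0∞), ← ENNReal.rpow_neg,
    ENNReal.ofReal_rpow_of_pos hd, ← ENNReal.ofReal_ofNat, ← ENNReal.ofReal_mul (by norm_num)]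
  exact ENNReal.ofReal_le_ofReal (rpow_neg_three_halves_le ht hd (by linarith))

theorem enorm_sq_le_two_mul_enorm_sub_sq_add {E : Type*} [SeminormedAddGroup E] (a b : E) :
    ‖a‖ₑ ^ 2 ≤ 2 * ‖a - b‖ₑ ^ 2 + 2 * ‖b‖ₑ ^ 2 := by
  have h : ‖a‖₊ ^ 2 ≤ 2 * (‖a - b‖₊ ^ 2 + ‖b‖₊ ^ 2) :=
    (pow_le_pow_left₀ zero_le (by simpa using nnnorm_add_le (a - b) b) 2).trans add_sq_le
  rw [← mul_add, enorm_eq_nnnorm, enorm_eq_nnnorm, enorm_eq_nnnorm]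
  exact_mod_cast h

theorem lintegral_Ioi_le_of_forall_lt {f : ℝ → ℝ≥0∞} {a : ℝ} {C : ℝ≥0∞}
    (h : ∀ ε, a < ε → ∫⁻ t in Ioi ε, f t ≤ C) : ∫⁻ t in Ioi a, f t ≤ C := by
  have hU : ⋃ n : ℕ, Ioi (a + 1 / ((n : ℝ) + 1)) = Ioi a := by
    ext t
    simp only [mem_iUnion, mem_Ioi]
    refine ⟨fun ⟨n, hn⟩ => lt_trans (by simp; positivity) hn, fun ht => ?_⟩
    obtain ⟨n, hn⟩ := exists_nat_one_div_lt (sub_pos.2 ht)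
    exact ⟨n, by linarith⟩
  have hmono : Monotone fun n : ℕ => Ioi (a + 1 / ((n : ℝ) + 1)) := fun m n hmn =>
    Ioi_subset_Ioi (by gcongr)
  rw [← hU, setLIntegral_iUnion_of_directed _ hmono.directed_le]
  exact iSup_le fun n => h _ (by simp; positivity)

theorem lintegral_Ioi_mul_rpow_ne_top {g : ℝ → ℝ≥0∞} (hg : ∫⁻ t, g t ≠ ∞) {ε : ℝ}
    (hε : 0 < ε) : ∫⁻ t in Ioi ε, g t * ENNReal.ofReal (t ^ (-(1 / 2) : ℝ)) ≠ ∞ := by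
  refine ne_top_of_le_ne_top
    (ENNReal.mul_ne_top hg (ENNReal.ofReal_ne_top (r := ε ^ (-(1 / 2) : ℝ)))) ?_
  calc ∫⁻ t in Ioi ε, g t * ENNReal.ofReal (t ^ (-(1 / 2) : ℝ))
      ≤ ∫⁻ t in Ioi ε, g t * ENNReal.ofReal (ε ^ (-(1 / 2) : ℝ)) :=
        setLIntegral_mono' measurableSet_Ioi fun t ht => mul_le_mul_right
          (ENNReal.ofReal_le_ofReal
            (Real.rpow_le_rpow_of_nonpos hε ht.le (by norm_num : (-(1 / 2) : ℝ) ≤ 0))) _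
    _ ≤ (∫⁻ t, g t) * ENNReal.ofReal (ε ^ (-(1 / 2) : ℝ)) := by
        rw [lintegral_mul_const' _ _ ENNReal.ofReal_ne_top]
        exact mul_le_mul_left (setLIntegral_le_lintegral _ _) _

theorem lintegral_Ioi_lintegral_Ioo_mul_rpow_le {g : ℝ → ℝ≥0∞} (hg : Measurable g) {ε : ℝ}
    (hε : 0 ≤ ε) :
    ∫⁻ t in Ioi ε, ∫⁻ s in Ioo t (25 * t), g s * ENNReal.ofReal (t ^ (-(3 / 2) : ℝ)) ≤
      10 * ∫⁻ s in Ioi ε, g s * ENNReal.ofReal (s ^ (-(1 / 2) : ℝ)) := by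
  set S : Set (ℝ × ℝ) := {p | ε < p.1 ∧ p.1 < p.2 ∧ p.2 < 25 * p.1}
  set φ : ℝ × ℝ → ℝ≥0∞ := fun p => g p.2 * ENNReal.ofReal (p.1 ^ (-(3 / 2) : ℝ))
  have hS : MeasurableSet S :=
    (measurableSet_lt measurable_const measurable_fst).inter
      ((measurableSet_lt measurable_fst measurable_snd).inter
        (measurableSet_lt measurable_snd (measurable_fst.const_mul 25)))
  have hφ : Measurable φ := (hg.comp measurable_snd).mul (by fun_prop)
  have hinner : ∀ s, ∫⁻ t, S.indicator φ (t, s) ≤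
      (Ioi ε).indicator (fun s => 10 * (g s * ENNReal.ofReal (s ^ (-(1 / 2) : ℝ)))) s := by
    intro s
    by_cases hs : ε < s
    · calc ∫⁻ t, S.indicator φ (t, s)
          ≤ ∫⁻ t in Ioi (s / 25), g s * ENNReal.ofReal (t ^ (-(3 / 2) : ℝ)) := by
            rw [← lintegral_indicator measurableSet_Ioi]
            refine lintegral_mono fun t => ?_
            by_cases ht : (t, s) ∈ S
            · have hst : s < 25 * t := ht.2.2
              rw [indicator_of_mem ht, indicator_of_mem (mem_Ioi.2 (by linarith))]
            · rw [indicator_of_notMem ht]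
              exact zero_le
        _ = 10 * (g s * ENNReal.ofReal (s ^ (-(1 / 2) : ℝ))) := by
            rw [lintegral_const_mul _ (by fun_prop),
              lintegral_Ioi_div_25_rpow_neg_three_halves (hε.trans_lt hs)]
            ring
        _ = _ := by rw [indicator_of_mem (mem_Ioi.2 hs)]
    · have hzero : ∀ t, S.indicator φ (t, s) = 0 := fun t =>
        indicator_of_notMem (fun ht => hs (ht.1.trans ht.2.1)) _
      simp [hzero]
  calc ∫⁻ t in Ioi ε, ∫⁻ s in Ioo t (25 * t), g s * ENNReal.ofReal (t ^ (-(3 / 2) : ℝ))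
      = ∫⁻ t, ∫⁻ s, S.indicator φ (t, s) := by
        rw [← lintegral_indicator measurableSet_Ioi]
        refine lintegral_congr fun t => ?_
        by_cases ht : ε < t
        · rw [indicator_of_mem (mem_Ioi.2 ht), ← lintegral_indicator measurableSet_Ioo]
          refine lintegral_congr fun s => ?_
          simp [S, φ, indicator_apply, ht]
        · simp [S, ht]
    _ = ∫⁻ s, ∫⁻ t, S.indicator φ (t, s) :=
        lintegral_lintegral_swap (hφ.indicator hS).aemeasurable
    _ ≤ ∫⁻ s, (Ioi ε).indicator (fun s => 10 * (g s * ENNReal.ofReal (s ^ (-(1 / 2) : ℝ)))) s :=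
        lintegral_mono hinner
    _ = _ := by
        rw [lintegral_indicator measurableSet_Ioi, lintegral_const_mul _ (by fun_prop)]

section SobolevQuarter

variable {H : Type*} [NormedAddCommGroup H]

theorem sobQuarterSq_eq_lintegral_enorm (u : ℝ → H) :
    sobQuarterSq u = ∫⁻ t, ∫⁻ s, ‖u t - u s‖ₑ ^ 2 / ENNReal.ofReal |t - s| ^ ((3 : ℝ) / 2) :=
  rfl

theorem sobQuarterSq_congr_ae {u v : ℝ → H} (h : u =ᵐ[volume] v) :
    sobQuarterSq u = sobQuarterSq v := by
  refine lintegral_congr_ae ?_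
  filter_upwards [h] with t ht
  refine lintegral_congr_ae ?_
  filter_upwards [h] with s hs
  rw [ht, hs]

theorem measurable_sobQuarterSq_integrand {F : ℝ → H} (hF : StronglyMeasurable F) :
    Measurable (Function.uncurry fun t s =>
      ‖F t - F s‖ₑ ^ 2 / ENNReal.ofReal |t - s| ^ ((3 : ℝ) / 2)) :=
  (((hF.comp_measurable measurable_fst).sub (hF.comp_measurable measurable_snd)).enorm.pow_const
    2).div (by fun_prop)

theorem enorm_sq_mul_rpow_le {F : ℝ → H} (hF : StronglyMeasurable F) {t : ℝ} (ht : 0 < t) :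
    24 * (‖F t‖ₑ ^ 2 * ENNReal.ofReal (t ^ (-(1 / 2) : ℝ))) ≤
      250 * (∫⁻ s, ‖F t - F s‖ₑ ^ 2 / ENNReal.ofReal |t - s| ^ ((3 : ℝ) / 2)) +
      2 * ∫⁻ s in Ioo t (25 * t), ‖F s‖ₑ ^ 2 * ENNReal.ofReal (t ^ (-(3 / 2) : ℝ)) := by
  set κ := ENNReal.ofReal (t ^ (-(3 / 2) : ℝ))
  have hvol : 24 * ENNReal.ofReal (t ^ (-(1 / 2) : ℝ)) = volume (Ioo t (25 * t)) * κ := by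
    rw [Real.volume_Ioo, ← ENNReal.ofReal_ofNat, ← ENNReal.ofReal_mul (by norm_num),
      ← ENNReal.ofReal_mul (by linarith)]
    congr 1
    rw [show 25 * t - t = 24 * t by ring, mul_assoc,
      show (-(1 / 2) : ℝ) = 1 + -(3 / 2) by norm_num, Real.rpow_add ht, Real.rpow_one]
  have hmeas : Measurable fun s => ‖F t - F s‖ₑ ^ 2 / ENNReal.ofReal |t - s| ^ ((3 : ℝ) / 2) :=
    (measurable_sobQuarterSq_integrand hF).of_uncurry_left
  calc 24 * (‖F t‖ₑ ^ 2 * ENNReal.ofReal (t ^ (-(1 / 2) : ℝ)))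
      = ∫⁻ s in Ioo t (25 * t), ‖F t‖ₑ ^ 2 * κ := by
        rw [setLIntegral_const, mul_left_comm, hvol, mul_comm (volume _), mul_assoc]
    _ ≤ ∫⁻ s in Ioo t (25 * t),
          (250 * (‖F t - F s‖ₑ ^ 2 / ENNReal.ofReal |t - s| ^ ((3 : ℝ) / 2)) +
            2 * (‖F s‖ₑ ^ 2 * κ)) := by
        refine setLIntegral_mono' measurableSet_Ioo fun s hs => ?_
        calc ‖F t‖ₑ ^ 2 * κ ≤ (2 * ‖F t - F s‖ₑ ^ 2 + 2 * ‖F s‖ₑ ^ 2) * κ :=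
              mul_le_mul_left (enorm_sq_le_two_mul_enorm_sub_sq_add _ _) _
          _ ≤ 2 * ‖F t - F s‖ₑ ^ 2 * (125 / ENNReal.ofReal |t - s| ^ ((3 : ℝ) / 2))
                + 2 * (‖F s‖ₑ ^ 2 * κ) := by
              rw [add_mul, mul_assoc 2 (‖F s‖ₑ ^ 2)]
              gcongr
              exact ofReal_rpow_neg_three_halves_le_div ht hs.1 hs.2
          _ = _ := by simp only [div_eq_mul_inv]; ring
    _ = 250 * (∫⁻ s in Ioo t (25 * t),
            ‖F t - F s‖ₑ ^ 2 / ENNReal.ofReal |t - s| ^ ((3 : ℝ) / 2)) +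
          2 * ∫⁻ s in Ioo t (25 * t), ‖F s‖ₑ ^ 2 * κ := by
        rw [lintegral_add_left (hmeas.const_mul _), lintegral_const_mul _ hmeas,
          lintegral_const_mul' _ _ (by norm_num)]
    _ ≤ _ := add_le_add_left (mul_le_mul_right (setLIntegral_le_lintegral _ _) _) _

theorem lintegral_Ioi_enorm_sq_mul_rpow_le_add {F : ℝ → H} (hF : StronglyMeasurable F) {ε : ℝ}
    (hε : 0 ≤ ε) :
    24 * ∫⁻ t in Ioi ε, ‖F t‖ₑ ^ 2 * ENNReal.ofReal (t ^ (-(1 / 2) : ℝ)) ≤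
      250 * sobQuarterSq F +
        20 * ∫⁻ t in Ioi ε, ‖F t‖ₑ ^ 2 * ENNReal.ofReal (t ^ (-(1 / 2) : ℝ)) := by
  have hA : Measurable fun t => ∫⁻ s, ‖F t - F s‖ₑ ^ 2 / ENNReal.ofReal |t - s| ^ ((3 : ℝ) / 2) :=
    (measurable_sobQuarterSq_integrand hF).lintegral_prod_right
  calc 24 * ∫⁻ t in Ioi ε, ‖F t‖ₑ ^ 2 * ENNReal.ofReal (t ^ (-(1 / 2) : ℝ))
      = ∫⁻ t in Ioi ε, 24 * (‖F t‖ₑ ^ 2 * ENNReal.ofReal (t ^ (-(1 / 2) : ℝ))) :=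
        (lintegral_const_mul' _ _ (by norm_num)).symm
    _ ≤ ∫⁻ t in Ioi ε,
          (250 * (∫⁻ s, ‖F t - F s‖ₑ ^ 2 / ENNReal.ofReal |t - s| ^ ((3 : ℝ) / 2)) +
            2 * ∫⁻ s in Ioo t (25 * t), ‖F s‖ₑ ^ 2 * ENNReal.ofReal (t ^ (-(3 / 2) : ℝ))) :=
        setLIntegral_mono' measurableSet_Ioi fun t ht =>
          enorm_sq_mul_rpow_le hF (hε.trans_lt ht)
    _ = 250 * (∫⁻ t in Ioi ε,
            ∫⁻ s, ‖F t - F s‖ₑ ^ 2 / ENNReal.ofReal |t - s| ^ ((3 : ℝ) / 2)) +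
          2 * ∫⁻ t in Ioi ε,
            ∫⁻ s in Ioo t (25 * t), ‖F s‖ₑ ^ 2 * ENNReal.ofReal (t ^ (-(3 / 2) : ℝ)) := by
        rw [lintegral_add_left (hA.const_mul _), lintegral_const_mul _ hA,
          lintegral_const_mul' _ _ (by norm_num)]
    _ ≤ 250 * sobQuarterSq F +
          2 * (10 * ∫⁻ t in Ioi ε, ‖F t‖ₑ ^ 2 * ENNReal.ofReal (t ^ (-(1 / 2) : ℝ))) :=
        add_le_add (mul_le_mul_right (setLIntegral_le_lintegral _ _) _)
          (mul_le_mul_right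
            (lintegral_Ioi_lintegral_Ioo_mul_rpow_le (hF.enorm.pow_const 2) hε) _)
    _ = _ := by ring

theorem two_mul_lintegral_Ioi_enorm_sq_mul_rpow_le_sobQuarterSq {F : ℝ → H}
    (hF : StronglyMeasurable F) (hF2 : ∫⁻ t, ‖F t‖ₑ ^ 2 ≠ ∞) :
    2 * ∫⁻ t in Ioi 0, ‖F t‖ₑ ^ 2 * ENNReal.ofReal (t ^ (-(1 / 2) : ℝ)) ≤
      125 * sobQuarterSq F := by
  rw [← lintegral_const_mul' _ _ (by norm_num)]
  refine lintegral_Ioi_le_of_forall_lt fun ε hε => ?_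
  rw [lintegral_const_mul' _ _ (by norm_num)]
  set I := ∫⁻ t in Ioi ε, ‖F t‖ₑ ^ 2 * ENNReal.ofReal (t ^ (-(1 / 2) : ℝ))
  have hI : I ≠ ∞ := lintegral_Ioi_mul_rpow_ne_top hF2 hε
  have habsorb := lintegral_Ioi_enorm_sq_mul_rpow_le_add hF hε.le
  rw [show (24 : ℝ≥0∞) = 4 + 20 by norm_num, add_mul,
    ENNReal.add_le_add_iff_right (ENNReal.mul_ne_top (by norm_num) hI)] at habsorb
  rw [← ENNReal.mul_le_mul_iff_right two_ne_zero ENNReal.ofNat_ne_top]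
  calc 2 * (2 * I) = 4 * I := by ring
    _ ≤ 250 * sobQuarterSq F := habsorb
    _ = 2 * (125 * sobQuarterSq F) := by ring

theorem sobQuarterSq_indicator_Ici_le {F : ℝ → H} (hF : StronglyMeasurable F) :
    sobQuarterSq ((Ici 0).indicator F) ≤
      sobQuarterSq F + 4 * ∫⁻ t in Ioi 0, ‖F t‖ₑ ^ 2 * ENNReal.ofReal (t ^ (-(1 / 2) : ℝ)) := by
  set k : ℝ → ℝ → ℝ≥0∞ := fun t s => ENNReal.ofReal |t - s| ^ ((3 : ℝ) / 2)
  set c : ℝ → ℝ → ℝ≥0∞ := fun t s => if 0 ≤ t ∧ s < 0 then ‖F t‖ₑ ^ 2 else 0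
  have hjump : ∀ t s, ‖(Ici 0).indicator F t - (Ici 0).indicator F s‖ₑ ^ 2 ≤
      ‖F t - F s‖ₑ ^ 2 + c t s + c s t := by
    intro t s
    rcases le_or_gt 0 t with ht | ht <;> rcases le_or_gt 0 s with hs | hs <;>
      simp [c, ht, hs, ht.not_gt, hs.not_gt]
  have hk : ∀ t s, k t s = k s t := fun t s => by simp only [k, abs_sub_comm]
  have hmeas_d := measurable_sobQuarterSq_integrand hF
  have hmeas_c : Measurable (Function.uncurry fun t s => c t s / k t s) :=
    (Measurable.ite ((measurableSet_le measurable_const measurable_fst).inter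
      (measurableSet_lt measurable_snd measurable_const))
      ((hF.enorm.pow_const 2).comp measurable_fst) measurable_const).div (by fun_prop)
  have hmeas_c' : Measurable (Function.uncurry fun t s => c s t / k s t) :=
    hmeas_c.comp measurable_swap
  have hcross : ∫⁻ t, ∫⁻ s, c t s / k t s =
      2 * ∫⁻ t in Ioi 0, ‖F t‖ₑ ^ 2 * ENNReal.ofReal (t ^ (-(1 / 2) : ℝ)) := by
    rw [← lintegral_Ici_lintegral_Iio_div_rpow, ← lintegral_indicator measurableSet_Ici]
    refine lintegral_congr fun t => ?_
    by_cases ht : 0 ≤ t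
    · rw [indicator_of_mem (mem_Ici.2 ht), ← lintegral_indicator measurableSet_Iio]
      refine lintegral_congr fun s => ?_
      by_cases hs : s < 0 <;> simp [c, k, ht, hs]
    · simp [c, ht]
  calc sobQuarterSq ((Ici 0).indicator F)
      ≤ ∫⁻ t, ∫⁻ s, (‖F t - F s‖ₑ ^ 2 / k t s + c t s / k t s + c s t / k s t) :=
        lintegral_mono fun t => lintegral_mono fun s => by
          rw [hk s t, ← ENNReal.add_div, ← ENNReal.add_div]
          exact ENNReal.div_le_div_right (hjump t s) _
    _ = sobQuarterSq F + (∫⁻ t, ∫⁻ s, c t s / k t s) + ∫⁻ t, ∫⁻ s, c s t / k s t := by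
        rw [sobQuarterSq_eq_lintegral_enorm, ← lintegral_add_left hmeas_d.lintegral_prod_right,
          ← lintegral_add_right _ hmeas_c'.lintegral_prod_right]
        refine lintegral_congr fun t => ?_
        rw [lintegral_add_right _ hmeas_c'.of_uncurry_left,
          lintegral_add_right _ hmeas_c.of_uncurry_left]
    _ = _ := by
        rw [lintegral_lintegral_swap hmeas_c'.aemeasurable, hcross]
        ring

end SobolevQuarter

theorem statement10_general {H : Type*} [NormedAddCommGroup H] :
    ∃ C : ℝ≥0∞, C ≠ ∞ ∧
    ∀ F : ℝ → H, MemLp F 2 (volume : Measure ℝ) → sobQuarterSq F ≠ ∞ →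
      sobQuarterSq (fun t => if 0 ≤ t then F t else 0) ≤ C * sobQuarterSq F := by
  refine ⟨251, by simp, fun F hF _ => ?_⟩
  set G := hF.1.mk F
  have hFG : F =ᵐ[volume] G := hF.1.ae_eq_mk
  have hG : StronglyMeasurable G := hF.1.stronglyMeasurable_mk
  have hG2 : ∫⁻ t, ‖G t‖ₑ ^ 2 ≠ ∞ := by
    simpa using (lintegral_rpow_enorm_lt_top_of_eLpNorm_lt_top two_ne_zero ENNReal.ofNat_ne_top
      (hF.ae_eq hFG).eLpNorm_lt_top).ne
  change sobQuarterSq ((Ici 0).indicator F) ≤ _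
  rw [sobQuarterSq_congr_ae hFG.indicator, sobQuarterSq_congr_ae hFG]
  calc sobQuarterSq ((Ici 0).indicator G)
      ≤ sobQuarterSq G + 4 * ∫⁻ t in Ioi 0, ‖G t‖ₑ ^ 2 * ENNReal.ofReal (t ^ (-(1 / 2) : ℝ)) :=
        sobQuarterSq_indicator_Ici_le hG
    _ = sobQuarterSq G +
          2 * (2 * ∫⁻ t in Ioi 0, ‖G t‖ₑ ^ 2 * ENNReal.ofReal (t ^ (-(1 / 2) : ℝ))) := by ring
    _ ≤ sobQuarterSq G + 2 * (125 * sobQuarterSq G) := by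
        gcongr sobQuarterSq G + 2 * ?_
        exact two_mul_lintegral_Ioi_enorm_sq_mul_rpow_le_sobQuarterSq hG hG2
    _ = 251 * sobQuarterSq G := by ring

/-- Multiplication by the Heaviside function `h = 1_{[0,∞)}` is bounded
on `Ḣ^{1/4}(ℝ; H) ∩ L²(ℝ; H)`: if `F ∈ L²(ℝ,H)` and `|∂_t|^{1/4}F ∈ L²(ℝ,H)` (i.e. the
`Ḣ^{1/4}` seminorm of `F` is finite), then
`‖|∂_t|^{1/4}(hF)‖_{L²(ℝ,H)} ≲ ‖|∂_t|^{1/4}F‖_{L²(ℝ,H)}`. -/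
theorem statement10 {H : Type*} [NormedAddCommGroup H] [NormedSpace ℝ H] :
    ∃ C : ℝ≥0∞, C ≠ ∞ ∧
    ∀ F : ℝ → H, MemLp F 2 (volume : Measure ℝ) → sobQuarterSq F ≠ ∞ →
      sobQuarterSq (fun t => if 0 ≤ t then F t else 0) ≤ C * sobQuarterSq F :=
  statement10_general
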